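/- Let V be a real vector space, T : V × V × V → ℝ a trilinear map, G a group, and ρ : G → (V → V) an action of G on V by linear maps each of which preserves T (i.e., T(ρ(g)x, ρ(g)y, ρ(g)z) = T(x, y, z) for all g, x, y, z). Suppose ξ₁, ξ₂, ξ₃ ∈ V are common eigenvectors, ρ(g) ξ_j = χ_j(g) ξ_j, where χ_j : G → ℝ_{>0} are group homomorphisms such that for every pair of indices j₁ ≠ j₂ the image of the homomorphism g ↦ (log χ_{j₁}(g), log χ_{j₂}(g)) spans ℝ² as a real vector space. If η ∈ V satisfies ρ(g) η = η for all g ∈ G, then T(ξ_i, ξ_j, η) = 0 for all i, j ∈ {1, 2, 3}; in particular, setting ξ = ξ₁ + ξ₂ + ξ₃, one has T(ξ, ξ, η) = 0. -/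
import Mathlib


/-- Abstract form of Lemma 2.5 (case `k = 1`): let a group `G` act on `V` by
linear maps preserving a trilinear form `T`, let `ξ₀, ξ₁, ξ₂` be common
eigenvectors with positive characters `χ j` whose pairwise logarithm images span
`ℝ²`, and let `η` be `G`-invariant. Then `T (ξ i) (ξ j) η = 0` for all `i, j`;
in particular `T ξ ξ η = 0` for `ξ = ξ₀ + ξ₁ + ξ₂`. -/
theorem trilinear_invariant_class_pairing_vanishes
    {V : Type*} [AddCommGroup V] [Module ℝ V] {G : Type*} [Group G]
    (T : V →ₗ[ℝ] V →ₗ[ℝ] V →ₗ[ℝ] ℝ) (ρ : G →* Module.End ℝ V)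
    (hinv : ∀ (g : G) (x y z : V), T (ρ g x) (ρ g y) (ρ g z) = T x y z)
    (ξ : Fin 3 → V) (χ : Fin 3 → (G →* ℝ))
    (hpos : ∀ (j : Fin 3) (g : G), 0 < χ j g)
    (heig : ∀ (j : Fin 3) (g : G), ρ g (ξ j) = χ j g • ξ j)
    (hspan : ∀ j₁ j₂ : Fin 3, j₁ ≠ j₂ →
      Submodule.span ℝ
        (Set.range fun g => ((Real.log (χ j₁ g), Real.log (χ j₂ g)) : ℝ × ℝ)) = ⊤)
    (η : V) (hη : ∀ g : G, ρ g η = η) :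
    (∀ i j : Fin 3, T (ξ i) (ξ j) η = 0) ∧
      T (ξ 0 + ξ 1 + ξ 2) (ξ 0 + ξ 1 + ξ 2) η = 0 := by
  have key : ∀ i j : Fin 3, T (ξ i) (ξ j) η = 0 := by
    intro i j
    by_contra hT
    have hmul : ∀ g : G, χ i g * χ j g = 1 := by
      intro g
      have h := hinv g (ξ i) (ξ j) η
      rw [heig, heig, hη] at h
      simp only [map_smul, LinearMap.smul_apply, smul_eq_mul] at h
      have h2 : (χ i g * χ j g) * T (ξ i) (ξ j) η = 1 * T (ξ i) (ξ j) η := by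
        rw [one_mul]; linarith [h]
      exact mul_right_cancel₀ hT h2
    have hlog : ∀ g : G, Real.log (χ i g) + Real.log (χ j g) = 0 := by
      intro g
      rw [← Real.log_mul (ne_of_gt (hpos i g)) (ne_of_gt (hpos j g)), hmul, Real.log_one]
    by_cases hij : i = j
    · subst hij
      have hone : ∀ g : G, Real.log (χ i g) = 0 := by
        intro g
        have := hlog g; linarith
      set j₂ : Fin 3 := if i = 0 then 1 else 0 with hj₂
      have hne : i ≠ j₂ := by
        by_cases h0 : i = 0 <;> simp [hj₂, h0]
      have hsp := hspan i j₂ hne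
      have hle : Submodule.span ℝ
          (Set.range fun g => ((Real.log (χ i g), Real.log (χ j₂ g)) : ℝ × ℝ))
          ≤ LinearMap.ker (LinearMap.fst ℝ ℝ ℝ) := by
        rw [Submodule.span_le]
        rintro p ⟨g, rfl⟩
        simp [LinearMap.mem_ker, hone g]
      rw [hsp] at hle
      have : ((1 : ℝ), (0 : ℝ)) ∈ LinearMap.ker (LinearMap.fst ℝ ℝ ℝ) :=
        hle Submodule.mem_top
      simp [LinearMap.mem_ker] at this
    · have hsp := hspan i j hij
      have hle : Submodule.span ℝ
          (Set.range fun g => ((Real.log (χ i g), Real.log (χ j g)) : ℝ × ℝ))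
          ≤ LinearMap.ker (LinearMap.fst ℝ ℝ ℝ + LinearMap.snd ℝ ℝ ℝ) := by
        rw [Submodule.span_le]
        rintro p ⟨g, rfl⟩
        simp [LinearMap.mem_ker, hlog g]
      rw [hsp] at hle
      have : ((1 : ℝ), (0 : ℝ)) ∈
          LinearMap.ker (LinearMap.fst ℝ ℝ ℝ + LinearMap.snd ℝ ℝ ℝ) :=
        hle Submodule.mem_top
      simp [LinearMap.mem_ker] at this
  refine ⟨key, ?_⟩
  simp only [map_add, LinearMap.add_apply, key]
  ring
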